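/- Let R be an integral domain with fraction field F, let m ∈ R be nonzero, and let f ∈ R. Let φ : R[X] → F be the unique R-algebra homomorphism with φ(X) = f/m. Then the kernel of φ equals the saturation of the principal ideal ⟨mX − f⟩ with respect to powers of m, i.e. ker φ = {g ∈ R[X] : ∃ n ∈ ℕ, m^n · g ∈ ⟨mX − f⟩}. Consequently, the subring of F generated by R and f/m is isomorphic to R[X]/(⟨mX − f⟩ : ⟨m⟩^∞). -/
import Mathlib


/-- The saturation `(I : ⟨m⟩^∞) = {g : ∃ n, m^n · g ∈ I}` of an ideal `I` with respect to the
powers of an element `m`. -/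
def satIdeal {A : Type*} [CommRing A] (I : Ideal A) (m : A) : Ideal A where
  carrier := {g : A | ∃ n : ℕ, m ^ n * g ∈ I}
  zero_mem' := ⟨0, by simp⟩
  add_mem' := by
    rintro a b ⟨n, hn⟩ ⟨k, hk⟩
    refine ⟨n + k, ?_⟩
    rw [mul_add]
    refine Ideal.add_mem _ ?_ ?_
    · have h : m ^ (n + k) * a = m ^ k * (m ^ n * a) := by ring
      rw [h]; exact Ideal.mul_mem_left _ _ hn
    · have h : m ^ (n + k) * b = m ^ n * (m ^ k * b) := by ring
      rw [h]; exact Ideal.mul_mem_left _ _ hk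
  smul_mem' := by
    rintro c a ⟨n, hn⟩
    refine ⟨n, ?_⟩
    have h : m ^ n * (c • a) = c * (m ^ n * a) := by rw [smul_eq_mul]; ring
    rw [h]; exact Ideal.mul_mem_left _ _ hn

open Polynomial in
/-- Reduction modulo `mX - f`: `m^n · g` is congruent to a constant for `n ≥ deg g`. -/
lemma exists_const_mod_span {R : Type*} [CommRing R] (m f : R) :
    ∀ (n : ℕ) (g : R[X]), g.natDegree ≤ n →
      ∃ c : R, C m ^ n * g - C c ∈ Ideal.span {C m * X - C f} := by
  intro n
  induction n with
  | zero =>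
    intro g hg
    refine ⟨g.coeff 0, ?_⟩
    rw [Polynomial.eq_C_of_natDegree_le_zero hg]
    simp
  | succ n ih =>
    intro g hg
    set d := g.divX with hd
    set a := g.coeff 0 with ha
    have hdeg : (d * C f).natDegree ≤ n := by
      refine le_trans natDegree_mul_le ?_
      have h1 : d.natDegree = g.natDegree - 1 := g.natDegree_divX_eq_natDegree_tsub_one
      simp only [natDegree_C, add_zero, h1]
      omega
    obtain ⟨c', hc'⟩ := ih (d * C f) hdeg
    refine ⟨c' + m ^ (n + 1) * a, ?_⟩
    have hgeq : g = d * X + C a := (g.divX_mul_X_add).symm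
    have key : C m ^ (n + 1) * g - C (c' + m ^ (n + 1) * a)
        = (C m ^ n * d) * (C m * X - C f)
          + (C m ^ n * (d * C f) - C c') := by
      rw [hgeq]
      simp only [C_add, C_mul, C_pow]
      ring
    rw [key]
    exact add_mem (Ideal.mul_mem_left _ _ (Ideal.subset_span rfl)) hc'

open Polynomial in
/-- Lemma 2.2 (lem:sat): for a domain `R` with fraction field `F`, `m ∈ R` nonzero and `f ∈ R`,
the kernel of the `R`-algebra map `R[X] → F`, `X ↦ f/m`, is the saturation
`(⟨mX - f⟩ : ⟨m⟩^∞)`; consequently the subring of `F` generated by `R` and `f/m` is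
isomorphic to `R[X]/(⟨mX - f⟩ : ⟨m⟩^∞)`. -/
theorem ker_aeval_div_eq_saturation
    (R : Type*) [CommRing R] [IsDomain R]
    (F : Type*) [Field F] [Algebra R F] [IsFractionRing R F]
    (m : R) (hm : m ≠ 0) (f : R) :
    RingHom.ker (aeval (algebraMap R F f / algebraMap R F m) : R[X] →ₐ[R] F)
        = satIdeal (Ideal.span {C m * X - C f}) (C m) ∧
      Nonempty ((R[X] ⧸ satIdeal (Ideal.span {C m * X - C f}) (C m)) ≃ₐ[R]
        Algebra.adjoin R {algebraMap R F f / algebraMap R F m}) := by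
  set x : F := algebraMap R F f / algebraMap R F m with hx
  have hminj : Function.Injective (algebraMap R F) := IsFractionRing.injective R F
  have hmF : algebraMap R F m ≠ 0 := fun h => hm (hminj (by simpa using h))
  have hgen : (aeval x : R[X] →ₐ[R] F) (C m * X - C f) = 0 := by
    simp [hx, mul_div_cancel₀ _ hmF]
  have hspan : ∀ p ∈ Ideal.span {C m * X - C f}, (aeval x : R[X] →ₐ[R] F) p = 0 := by
    intro p hp
    obtain ⟨q, rfl⟩ := Ideal.mem_span_singleton'.mp hp
    simp [hgen]
  have hker : RingHom.ker (aeval x : R[X] →ₐ[R] F)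
      = satIdeal (Ideal.span {C m * X - C f}) (C m) := by
    ext g
    constructor
    · intro hg
      obtain ⟨c, hc⟩ := exists_const_mod_span m f g.natDegree g le_rfl
      refine ⟨g.natDegree, ?_⟩
      have h0 : (aeval x : R[X] →ₐ[R] F) (C m ^ g.natDegree * g - C c) = 0 := hspan _ hc
      have hg0 : (aeval x : R[X] →ₐ[R] F) g = 0 := hg
      have hc0 : algebraMap R F c = 0 := by
        simpa [hg0] using h0.symm
      have : c = 0 := hminj (by simpa using hc0)
      subst this
      simpa using hc
    · rintro ⟨n, hn⟩
      have h0 : (aeval x : R[X] →ₐ[R] F) (C m ^ n * g) = 0 := hspan _ hn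
      have : (algebraMap R F m) ^ n * (aeval x : R[X] →ₐ[R] F) g = 0 := by
        simpa using h0
      have := mul_eq_zero.mp this
      rcases this with h | h
      · exact absurd h (pow_ne_zero _ hmF)
      · exact h
  refine ⟨hker, ?_⟩
  rw [← hker]
  exact ⟨(Ideal.quotientKerEquivRange (aeval x : R[X] →ₐ[R] F)).trans
    (Subalgebra.equivOfEq _ _ (Algebra.adjoin_singleton_eq_range_aeval R x).symm)⟩
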